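/- If M and L are stellar equivalent complexes on disjoint vertex sets from a complex P, and P is vertex-disjoint from both, then the joins satisfy M ⋆ P ∼ L ⋆ P (stellar equivalence is preserved under join with a fixed complex). -/

import Mathlib

open Finset

/-- A `Chain` is a formal `ℤ/2`-sum of simplexes (finite sets of integer vertices). -/
abbrev Chain : Type := (Finset ℕ) →₀ ZMod 2

/-- Boundary of a single simplex: the sum of its codimension-1 faces. -/
noncomputable def sbnd (s : Finset ℕ) : Chain :=
  ∑ i ∈ s, Finsupp.single (s.erase i) 1

/-- The `ℤ/2` boundary operator, extended linearly to chains. -/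
noncomputable def bnd (C : Chain) : Chain :=
  C.sum fun s c => c • sbnd s

/-- Join of chains, defined bilinearly by union of vertex sets on simplexes. -/
noncomputable def joinC (K L : Chain) : Chain :=
  K.sum fun A a => L.sum fun B b => Finsupp.single (A ∪ B) (a * b)

/-- The link `lk(A,K)`. -/
noncomputable def lkC (A : Finset ℕ) (K : Chain) : Chain :=
  K.sum fun g c => if A ⊆ g then Finsupp.single (g \ A) c else 0

/-- `Q(A,K)`: the sum of generators of `K` not containing `A`. -/
noncomputable def QC (A : Finset ℕ) (K : Chain) : Chain :=
  K.sum fun g c => if A ⊆ g then 0 else Finsupp.single g c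

/-- Stellar subdivision `(A a)K = a ⋆ ∂A ⋆ lk(A,K) + Q(A,K)`. -/
noncomputable def subdivC (A : Finset ℕ) (a : ℕ) (K : Chain) : Chain :=
  joinC (Finsupp.single {a} 1) (joinC (sbnd A) (lkC A K)) + QC A K

/-- Stellar weld `(A a)⁻¹ K = A ⋆ B + Q(a,K)` (for `lk(a,K) = ∂A ⋆ B`). -/
noncomputable def weldC (A : Finset ℕ) (a : ℕ) (B K : Chain) : Chain :=
  joinC (Finsupp.single A 1) B + QC {a} K

/-- Relabeling of vertices by a map `f`. -/
noncomputable def renameC (f : ℕ → ℕ) (K : Chain) : Chain :=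
  K.sum fun g c => Finsupp.single (g.image f) c

/-- The set of vertices of a chain. -/
def vertsC (K : Chain) : Finset ℕ := K.support.sup id

/-- A stellar move: a subdivision, a weld, or a bijective relabeling of vertices. -/
inductive StellarMove : Chain → Chain → Prop
  | subdiv (A : Finset ℕ) (a : ℕ) (K : Chain)
      (hA : ∃ g ∈ K.support, A ⊆ g) (hA' : A.Nonempty)
      (ha : ∀ g ∈ K.support, a ∉ g) :
      StellarMove K (subdivC A a K)
  | weld (A : Finset ℕ) (a : ℕ) (B K : Chain)
      (hlk : lkC {a} K = joinC (sbnd A) B)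
      (hA : ∀ g ∈ K.support, ¬ A ⊆ g) (hA' : A.Nonempty) :
      StellarMove K (weldC A a B K)
  | relabel (f : ℕ → ℕ) (hf : Function.Bijective f) (K : Chain) :
      StellarMove K (renameC f K)

/-- Stellar equivalence: a finite sequence of stellar moves. -/
def StellarEquiv : Chain → Chain → Prop := Relation.ReflTransGen StellarMove

/-!
A stellar move of `M` carries over to `M ⋆ P` only when the vertices it involves avoid `P`.
So the sequence of moves `M ∼ L` is followed up to relabelling: every intermediate complex `K`
is replaced by a copy `σ K`, for a permutation `σ` of `ℕ`, that is vertex-disjoint from `P` and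
such that `σ K ⋆ P` is reachable from `M ⋆ P`. Before a subdivision or a weld, `σ` is changed
away from the vertices of `K` so that the new vertices land outside `P`; the move then commutes
with `⋆ P`. A relabelling is absorbed into `σ`. Finally, since `L` and `σ L` both avoid `P`, a
single relabelling (`σ⁻¹` on `σ L`, the identity on `P`) takes `σ L ⋆ P` to `L ⋆ P`.
-/

lemma joinC_zero_left (L : Chain) : joinC 0 L = 0 := Finsupp.sum_zero_index

lemma joinC_zero_right (K : Chain) : joinC K 0 = 0 := by
  simp [joinC]

lemma joinC_single_left (A : Finset ℕ) (a : ZMod 2) (L : Chain) :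
    joinC (Finsupp.single A a) L = L.sum fun B b => Finsupp.single (A ∪ B) (a * b) :=
  Finsupp.sum_single_index (by simp)

lemma joinC_single_single (A B : Finset ℕ) (a b : ZMod 2) :
    joinC (Finsupp.single A a) (Finsupp.single B b) = Finsupp.single (A ∪ B) (a * b) := by
  rw [joinC_single_left]
  exact Finsupp.sum_single_index (by simp)

lemma joinC_add_left (K K' L : Chain) : joinC (K + K') L = joinC K L + joinC K' L := by
  refine Finsupp.sum_add_index' (fun _ => by simp) fun A b₁ b₂ => ?_
  rw [← Finsupp.sum_add]
  exact Finsupp.sum_congr fun B _ => by rw [add_mul, Finsupp.single_add]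

lemma joinC_add_right (K L L' : Chain) : joinC K (L + L') = joinC K L + joinC K L' := by
  rw [joinC, joinC, joinC, ← Finsupp.sum_add]
  exact Finsupp.sum_congr fun A _ => Finsupp.sum_add_index' (fun _ => by simp)
    fun B b₁ b₂ => by rw [mul_add, Finsupp.single_add]

lemma joinC_assoc (K L M : Chain) : joinC (joinC K L) M = joinC K (joinC L M) := by
  induction K using Finsupp.induction_linear with
  | zero => simp only [joinC_zero_left]
  | add K K' hK hK' => simp only [joinC_add_left, hK, hK']
  | single A a =>
    induction L using Finsupp.induction_linear with
    | zero => simp only [joinC_zero_left, joinC_zero_right]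
    | add L L' hL hL' => simp only [joinC_add_left, joinC_add_right, hL, hL']
    | single B b =>
      induction M using Finsupp.induction_linear with
      | zero => simp only [joinC_zero_right]
      | add M M' hM hM' => simp only [joinC_add_right, hM, hM']
      | single C c => simp only [joinC_single_single, union_assoc, mul_assoc]

lemma lkC_zero (A : Finset ℕ) : lkC A 0 = 0 := Finsupp.sum_zero_index

lemma lkC_single (A g : Finset ℕ) (c : ZMod 2) :
    lkC A (Finsupp.single g c) = if A ⊆ g then Finsupp.single (g \ A) c else 0 :=
  Finsupp.sum_single_index (by simp)

lemma lkC_add (A : Finset ℕ) (K K' : Chain) : lkC A (K + K') = lkC A K + lkC A K' :=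
  Finsupp.sum_add_index' (fun _ => by simp) fun _ _ _ => by split_ifs <;> simp

lemma lkC_sum {α : Type*} (A : Finset ℕ) (p : α →₀ ZMod 2) (F : α → ZMod 2 → Chain) :
    lkC A (p.sum F) = p.sum fun x c => lkC A (F x c) :=
  Finsupp.sum_sum_index (fun _ => by simp) fun _ _ _ => by split_ifs <;> simp

lemma QC_zero (A : Finset ℕ) : QC A 0 = 0 := Finsupp.sum_zero_index

lemma QC_single (A g : Finset ℕ) (c : ZMod 2) :
    QC A (Finsupp.single g c) = if A ⊆ g then 0 else Finsupp.single g c :=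
  Finsupp.sum_single_index (by simp)

lemma QC_add (A : Finset ℕ) (K K' : Chain) : QC A (K + K') = QC A K + QC A K' :=
  Finsupp.sum_add_index' (fun _ => by simp) fun _ _ _ => by split_ifs <;> simp

lemma QC_sum {α : Type*} (A : Finset ℕ) (p : α →₀ ZMod 2) (F : α → ZMod 2 → Chain) :
    QC A (p.sum F) = p.sum fun x c => QC A (F x c) :=
  Finsupp.sum_sum_index (fun _ => by simp) fun _ _ _ => by split_ifs <;> simp

lemma renameC_eq_mapDomain (f : ℕ → ℕ) (K : Chain) :
    renameC f K = Finsupp.mapDomain (image f) K := rfl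

lemma renameC_single (f : ℕ → ℕ) (g : Finset ℕ) (c : ZMod 2) :
    renameC f (Finsupp.single g c) = Finsupp.single (g.image f) c :=
  Finsupp.mapDomain_single

lemma renameC_zero (f : ℕ → ℕ) : renameC f 0 = 0 := Finsupp.mapDomain_zero

lemma renameC_add (f : ℕ → ℕ) (K K' : Chain) :
    renameC f (K + K') = renameC f K + renameC f K' :=
  Finsupp.mapDomain_add

lemma renameC_comp (f f' : ℕ → ℕ) (K : Chain) :
    renameC f' (renameC f K) = renameC (f' ∘ f) K := by
  simp only [renameC_eq_mapDomain, ← Finsupp.mapDomain_comp]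
  congr 1
  exact funext fun g => image_image

lemma renameC_congr {f f' : ℕ → ℕ} {K : Chain} (h : ∀ x ∈ vertsC K, f x = f' x) :
    renameC f K = renameC f' K :=
  Finsupp.mapDomain_congr fun g hg =>
    image_congr fun x hx => h x (mem_sup.mpr ⟨g, hg, hx⟩)

lemma renameC_id (K : Chain) : renameC id K = K := by
  rw [renameC_eq_mapDomain, show image (id : ℕ → ℕ) = id from funext fun _ => image_id,
    Finsupp.mapDomain_id]

lemma renameC_eq_self {f : ℕ → ℕ} {K : Chain} (h : ∀ x ∈ vertsC K, f x = x) :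
    renameC f K = K :=
  (renameC_congr h).trans (renameC_id K)

lemma renameC_inv_renameC (σ : Equiv.Perm ℕ) (K : Chain) :
    renameC ⇑σ⁻¹ (renameC σ K) = K := by
  rw [renameC_comp, ← Equiv.Perm.coe_mul, inv_mul_cancel, Equiv.Perm.coe_one, renameC_id]

lemma support_renameC {f : ℕ → ℕ} (hf : Function.Injective f) (K : Chain) :
    (renameC f K).support = K.support.image (image f) :=
  Finsupp.mapDomain_support_of_injective (image_injective hf) K

lemma renameC_joinC (f : ℕ → ℕ) (K L : Chain) :
    renameC f (joinC K L) = joinC (renameC f K) (renameC f L) := by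
  induction K using Finsupp.induction_linear with
  | zero => simp only [joinC_zero_left, renameC_zero]
  | add K K' hK hK' => simp only [joinC_add_left, renameC_add, hK, hK']
  | single A a =>
    induction L using Finsupp.induction_linear with
    | zero => simp only [joinC_zero_right, renameC_zero]
    | add L L' hL hL' => simp only [joinC_add_right, renameC_add, hL, hL']
    | single B b => simp only [joinC_single_single, renameC_single, image_union]

section Injective

variable {f : ℕ → ℕ}

lemma renameC_sbnd (hf : Function.Injective f) (A : Finset ℕ) :
    renameC f (sbnd A) = sbnd (A.image f) := by
  rw [sbnd, sbnd, renameC_eq_mapDomain, Finsupp.mapDomain_finsetSum,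
    sum_image fun x _ y _ h => hf h]
  exact sum_congr rfl fun i _ => by rw [Finsupp.mapDomain_single, image_erase hf]

lemma lkC_image_renameC (hf : Function.Injective f) (A : Finset ℕ) (K : Chain) :
    lkC (A.image f) (renameC f K) = renameC f (lkC A K) := by
  induction K using Finsupp.induction_linear with
  | zero => simp only [lkC_zero, renameC_zero]
  | add K K' hK hK' => simp only [renameC_add, lkC_add, hK, hK']
  | single g c =>
    simp only [renameC_single, lkC_single, image_subset_image_iff hf]
    split_ifs
    · rw [renameC_single, image_sdiff _ _ hf]
    · rw [renameC_zero]

lemma QC_image_renameC (hf : Function.Injective f) (A : Finset ℕ) (K : Chain) :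
    QC (A.image f) (renameC f K) = renameC f (QC A K) := by
  induction K using Finsupp.induction_linear with
  | zero => simp only [QC_zero, renameC_zero]
  | add K K' hK hK' => simp only [renameC_add, QC_add, hK, hK']
  | single g c =>
    simp only [renameC_single, QC_single, image_subset_image_iff hf]
    split_ifs
    · rw [renameC_zero]
    · rw [renameC_single]

lemma renameC_subdivC (hf : Function.Injective f) (A : Finset ℕ) (a : ℕ) (K : Chain) :
    renameC f (subdivC A a K) = subdivC (A.image f) (f a) (renameC f K) := by
  rw [subdivC, subdivC, renameC_add, renameC_joinC, renameC_joinC, renameC_single,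
    renameC_sbnd hf, ← lkC_image_renameC hf, ← QC_image_renameC hf, image_singleton]

lemma renameC_weldC (hf : Function.Injective f) (A : Finset ℕ) (a : ℕ) (B K : Chain) :
    renameC f (weldC A a B K) = weldC (A.image f) (f a) (renameC f B) (renameC f K) := by
  rw [weldC, weldC, renameC_add, renameC_joinC, renameC_single, ← QC_image_renameC hf,
    image_singleton]

end Injective

lemma subset_vertsC {K : Chain} {g : Finset ℕ} (hg : g ∈ K.support) : g ⊆ vertsC K :=
  le_sup (f := id) hg

lemma vertsC_renameC {f : ℕ → ℕ} (hf : Function.Injective f) (K : Chain) :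
    vertsC (renameC f K) = (vertsC K).image f := by
  rw [vertsC, vertsC, support_renameC hf, sup_image, Function.id_comp, sup_eq_biUnion,
    sup_eq_biUnion, biUnion_image]
  rfl

lemma disjoint_vertsC_renameC_iff (σ : Equiv.Perm ℕ) (K : Chain) (V : Finset ℕ) :
    Disjoint (vertsC (renameC σ K)) V ↔ ∀ x ∈ vertsC K, σ x ∉ V := by
  rw [vertsC_renameC σ.injective, disjoint_left, forall_mem_image]

lemma mem_support_joinC {K P : Chain} {G : Finset ℕ} (hG : G ∈ (joinC K P).support) :
    ∃ g ∈ K.support, ∃ h ∈ P.support, G = g ∪ h := by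
  classical
  obtain ⟨g, hg, hG⟩ := mem_biUnion.mp (Finsupp.support_sum hG)
  obtain ⟨h, hh, hG⟩ := mem_biUnion.mp (Finsupp.support_sum hG)
  exact ⟨g, hg, h, hh, mem_singleton.mp (Finsupp.support_single_subset hG)⟩

lemma subset_union_iff_of_disjoint {A g h : Finset ℕ} (hAh : Disjoint A h) :
    A ⊆ g ∪ h ↔ A ⊆ g :=
  ⟨fun hA => hAh.left_le_of_le_sup_right hA, fun hA => hA.trans subset_union_left⟩

lemma union_inj_of_disjoint {U V g g' h h' : Finset ℕ} (hUV : Disjoint U V)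
    (hg : g ⊆ U) (hg' : g' ⊆ U) (hh : h ⊆ V) (hh' : h' ⊆ V) (he : g ∪ h = g' ∪ h') :
    g = g' ∧ h = h' := by
  have hU : ∀ {s t : Finset ℕ}, s ⊆ U → t ⊆ V → (s ∪ t) ∩ U = s := fun hs ht => by
    rw [union_inter_distrib_right, inter_eq_left.mpr hs,
      disjoint_iff_inter_eq_empty.mp ((hUV.mono_right ht).symm), union_empty]
  have hV : ∀ {s t : Finset ℕ}, s ⊆ U → t ⊆ V → (s ∪ t) ∩ V = t := fun hs ht => by
    rw [union_inter_distrib_right, inter_eq_left.mpr ht,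
      disjoint_iff_inter_eq_empty.mp (hUV.mono_left hs), empty_union]
  exact ⟨by rw [← hU hg hh, he, hU hg' hh'], by rw [← hV hg hh, he, hV hg' hh']⟩

lemma joinC_apply_union {K P : Chain} {g h : Finset ℕ} (hKP : Disjoint (vertsC K) (vertsC P))
    (hg : g ∈ K.support) (hh : h ∈ P.support) : joinC K P (g ∪ h) = K g * P h := by
  rw [joinC, Finsupp.sum_apply, Finsupp.sum, sum_eq_single_of_mem g hg, Finsupp.sum_apply,
    Finsupp.sum, sum_eq_single_of_mem h hh, Finsupp.single_eq_same]
  · refine fun h' hh' hne => Finsupp.single_eq_of_ne fun he => hne ?_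
    exact (union_inj_of_disjoint hKP (subset_vertsC hg) (subset_vertsC hg)
      (subset_vertsC hh) (subset_vertsC hh') he).2.symm
  · refine fun g' hg' hne => (Finsupp.sum_apply ..).trans <|
      sum_eq_zero fun h' hh' => Finsupp.single_eq_of_ne fun he => hne ?_
    exact (union_inj_of_disjoint hKP (subset_vertsC hg) (subset_vertsC hg')
      (subset_vertsC hh) (subset_vertsC hh') he).1.symm

lemma union_mem_support_joinC {K P : Chain} {g h : Finset ℕ}
    (hKP : Disjoint (vertsC K) (vertsC P)) (hg : g ∈ K.support) (hh : h ∈ P.support) :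
    g ∪ h ∈ (joinC K P).support := by
  rw [Finsupp.mem_support_iff, joinC_apply_union hKP hg hh]
  exact mul_ne_zero (Finsupp.mem_support_iff.mp hg) (Finsupp.mem_support_iff.mp hh)

section JoinCommutes

variable {A : Finset ℕ} {P : Chain}

lemma lkC_joinC (hAP : Disjoint A (vertsC P)) (K : Chain) :
    lkC A (joinC K P) = joinC (lkC A K) P := by
  have hA : ∀ h ∈ P.support, Disjoint A h := fun h hh => hAP.mono_right (subset_vertsC hh)
  induction K using Finsupp.induction_linear with
  | zero => rw [joinC_zero_left, lkC_zero, joinC_zero_left]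
  | add K K' hK hK' => rw [joinC_add_left, lkC_add, lkC_add, joinC_add_left, hK, hK']
  | single g c =>
    rw [joinC_single_left, lkC_sum, lkC_single]
    split_ifs with hAg
    · rw [joinC_single_left]
      refine Finsupp.sum_congr fun h hh => ?_
      rw [lkC_single, if_pos ((subset_union_iff_of_disjoint (hA h hh)).mpr hAg),
        union_sdiff_distrib, sdiff_eq_self_of_disjoint (hA h hh).symm]
    · rw [joinC_zero_left]
      refine (Finsupp.sum_congr fun h hh => ?_).trans (Finsupp.sum_fun_zero P)
      rw [lkC_single, if_neg (mt (subset_union_iff_of_disjoint (hA h hh)).mp hAg)]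

lemma QC_joinC (hAP : Disjoint A (vertsC P)) (K : Chain) :
    QC A (joinC K P) = joinC (QC A K) P := by
  have hA : ∀ h ∈ P.support, Disjoint A h := fun h hh => hAP.mono_right (subset_vertsC hh)
  induction K using Finsupp.induction_linear with
  | zero => rw [joinC_zero_left, QC_zero, joinC_zero_left]
  | add K K' hK hK' => rw [joinC_add_left, QC_add, QC_add, joinC_add_left, hK, hK']
  | single g c =>
    rw [joinC_single_left, QC_sum, QC_single]
    split_ifs with hAg
    · rw [joinC_zero_left]
      refine (Finsupp.sum_congr fun h hh => ?_).trans (Finsupp.sum_fun_zero P)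
      rw [QC_single, if_pos ((subset_union_iff_of_disjoint (hA h hh)).mpr hAg)]
    · rw [joinC_single_left]
      refine Finsupp.sum_congr fun h hh => ?_
      rw [QC_single, if_neg (mt (subset_union_iff_of_disjoint (hA h hh)).mp hAg)]

lemma subdivC_joinC (hAP : Disjoint A (vertsC P)) (a : ℕ) (K : Chain) :
    subdivC A a (joinC K P) = joinC (subdivC A a K) P := by
  rw [subdivC, subdivC, lkC_joinC hAP, QC_joinC hAP, ← joinC_assoc (sbnd A), ← joinC_assoc,
    ← joinC_add_left]

lemma weldC_joinC {a : ℕ} (haP : a ∉ vertsC P) (A : Finset ℕ) (B K : Chain) :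
    weldC A a (joinC B P) (joinC K P) = joinC (weldC A a B K) P := by
  rw [weldC, weldC, QC_joinC (disjoint_singleton_left.mpr haP), ← joinC_assoc,
    ← joinC_add_left]

end JoinCommutes

section Moves

variable {K P B : Chain} {A : Finset ℕ} {a : ℕ}

lemma stellarMove_joinC_renameC_subdivC (hP : P ≠ 0) (σ : Equiv.Perm ℕ)
    (hA : ∃ g ∈ K.support, A ⊆ g) (hA' : A.Nonempty) (ha : ∀ g ∈ K.support, a ∉ g)
    (hKP : Disjoint (vertsC (renameC σ K)) (vertsC P)) (haP : σ a ∉ vertsC P) :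
    StellarMove (joinC (renameC σ K) P) (joinC (renameC σ (subdivC A a K)) P) := by
  obtain ⟨g, hg, hAg⟩ := hA
  obtain ⟨h, hh⟩ := Finsupp.support_nonempty_iff.mpr hP
  have hgσ : g.image σ ∈ (renameC σ K).support := by
    rw [support_renameC σ.injective]
    exact mem_image_of_mem _ hg
  have hAP : Disjoint (A.image σ) (vertsC P) :=
    hKP.mono_left ((image_subset_image hAg).trans (subset_vertsC hgσ))
  rw [renameC_subdivC σ.injective, ← subdivC_joinC hAP]
  refine .subdiv _ _ _ ⟨g.image σ ∪ h, union_mem_support_joinC hKP hgσ hh,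
    (image_subset_image hAg).trans subset_union_left⟩ (hA'.image σ) fun G hG => ?_
  obtain ⟨g', hg', h', hh', rfl⟩ := mem_support_joinC hG
  rw [support_renameC σ.injective] at hg'
  obtain ⟨g'', hg'', rfl⟩ := mem_image.mp hg'
  rw [mem_union, not_or, σ.injective.mem_finset_image]
  exact ⟨ha g'' hg'', fun hah => haP (subset_vertsC hh' hah)⟩

lemma stellarMove_joinC_renameC_weldC (σ : Equiv.Perm ℕ)
    (hlk : lkC {a} K = joinC (sbnd A) B) (hA : ∀ g ∈ K.support, ¬ A ⊆ g) (hA' : A.Nonempty)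
    (hAP : Disjoint (A.image σ) (vertsC P)) (haP : σ a ∉ vertsC P) :
    StellarMove (joinC (renameC σ K) P) (joinC (renameC σ (weldC A a B K)) P) := by
  rw [renameC_weldC σ.injective, ← weldC_joinC haP]
  refine .weld _ _ _ _ ?_ (fun G hG hAG => ?_) (hA'.image σ)
  · rw [lkC_joinC (disjoint_singleton_left.mpr haP), ← image_singleton,
      lkC_image_renameC σ.injective, hlk, renameC_joinC, renameC_sbnd σ.injective, joinC_assoc]
  · obtain ⟨g, hg, h, hh, rfl⟩ := mem_support_joinC hG
    rw [support_renameC σ.injective] at hg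
    obtain ⟨g', hg', rfl⟩ := mem_image.mp hg
    rw [subset_union_iff_of_disjoint (hAP.mono_right (subset_vertsC hh)),
      image_subset_image_iff σ.injective] at hAG
    exact hA g' hg' hAG

end Moves

lemma exists_perm_eqOn_avoid (σ : Equiv.Perm ℕ) {S V : Finset ℕ} (hσ : ∀ x ∈ S, σ x ∉ V)
    (W : Finset ℕ) : ∃ τ : Equiv.Perm ℕ, (∀ x ∈ S, τ x = σ x) ∧ ∀ x ∈ W, τ x ∉ V := by
  set N := (V ∪ S.image σ).sup id
  have hN : ∀ y ∈ V ∪ S.image σ, y ≤ N := fun y hy => le_sup (f := id) hy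
  obtain ⟨τ, hτ⟩ := Equiv.Perm.exists_extending_pair (α := S ⊕ (W \ S : Finset ℕ))
    (Sum.elim Subtype.val Subtype.val) (Sum.elim (σ ∘ Subtype.val) fun x => N + 1 + x)
    (Subtype.val_injective.sumElim Subtype.val_injective fun x y hxy =>
      (mem_sdiff.mp (hxy ▸ y.2)).2 x.2)
    ((σ.injective.comp Subtype.val_injective).sumElim
      (fun x y hxy => Subtype.ext (Nat.add_left_cancel hxy)) fun x y hxy => by
        have := hN _ (mem_union_right _ (mem_image_of_mem σ x.2))
        have : σ x = N + 1 + y := hxy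
        omega)
  refine ⟨τ, fun x hx => hτ (.inl ⟨x, hx⟩), fun x hx => ?_⟩
  by_cases hxS : x ∈ S
  · rw [show τ x = σ x from hτ (.inl ⟨x, hxS⟩)]
    exact hσ x hxS
  · rw [show τ x = N + 1 + x from hτ (.inr ⟨x, mem_sdiff.mpr ⟨hx, hxS⟩⟩)]
    intro hxV
    have := hN _ (mem_union_left _ hxV)
    omega

lemma stellarMove_joinC_renameC (σ : Equiv.Perm ℕ) {K P : Chain}
    (hKP : Disjoint (vertsC K) (vertsC P)) (hσKP : Disjoint (vertsC (renameC σ K)) (vertsC P)) :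
    StellarMove (joinC K P) (joinC (renameC σ K) P) := by
  have hσ := (disjoint_vertsC_renameC_iff σ K _).mp hσKP
  obtain ⟨τ, hτ⟩ := Equiv.Perm.exists_extending_pair (α := vertsC K ⊕ vertsC P)
    (Sum.elim Subtype.val Subtype.val) (Sum.elim (σ ∘ Subtype.val) Subtype.val)
    (Subtype.val_injective.sumElim Subtype.val_injective fun x y hxy =>
      disjoint_left.mp hKP x.2 (hxy ▸ y.2))
    ((σ.injective.comp Subtype.val_injective).sumElim Subtype.val_injective fun x y hxy =>
      hσ x x.2 (by rw [show σ x = y from hxy]; exact y.2))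
  have hτK : renameC τ K = renameC σ K := renameC_congr fun x hx => hτ (.inl ⟨x, hx⟩)
  have hτP : renameC τ P = P := renameC_eq_self fun x hx => hτ (.inr ⟨x, hx⟩)
  simpa only [renameC_joinC, hτK, hτP] using StellarMove.relabel τ τ.bijective (joinC K P)

lemma StellarMove.exists_perm_joinC {K K' P : Chain} (hP : P ≠ 0) (hK : StellarMove K K')
    (σ : Equiv.Perm ℕ) (hσK : Disjoint (vertsC (renameC σ K)) (vertsC P)) :
    ∃ τ : Equiv.Perm ℕ, Disjoint (vertsC (renameC τ K')) (vertsC P) ∧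
      StellarEquiv (joinC (renameC σ K) P) (joinC (renameC τ K') P) := by
  have hσP := (disjoint_vertsC_renameC_iff σ K _).mp hσK
  cases hK with
  | subdiv A a K hA hA' ha =>
    obtain ⟨τ, hτσ, hτP⟩ := exists_perm_eqOn_avoid σ hσP (vertsC (subdivC A a K) ∪ {a})
    have hτK : renameC τ K = renameC σ K := renameC_congr hτσ
    refine ⟨τ, (disjoint_vertsC_renameC_iff τ _ _).mpr fun x hx => hτP x (mem_union_left _ hx),
      .single ?_⟩
    rw [← hτK]
    exact stellarMove_joinC_renameC_subdivC hP τ hA hA' ha (hτK ▸ hσK)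
      (hτP a (mem_union_right _ (mem_singleton_self a)))
  | weld A a B K hlk hA hA' =>
    obtain ⟨τ, hτσ, hτP⟩ :=
      exists_perm_eqOn_avoid σ hσP (vertsC (weldC A a B K) ∪ insert a A)
    have hτK : renameC τ K = renameC σ K := renameC_congr hτσ
    refine ⟨τ, (disjoint_vertsC_renameC_iff τ _ _).mpr fun x hx => hτP x (mem_union_left _ hx),
      .single ?_⟩
    rw [← hτK]
    exact stellarMove_joinC_renameC_weldC τ hlk hA hA'
      (disjoint_left.mpr (forall_mem_image.mpr fun x hx =>
        hτP x (mem_union_right _ (mem_insert_of_mem hx))))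
      (hτP a (mem_union_right _ (mem_insert_self a A)))
  | relabel f hf K =>
    have hσf : renameC ⇑(σ * (Equiv.ofBijective f hf)⁻¹) (renameC f K) = renameC σ K := by
      rw [renameC_comp]
      exact congrArg (renameC · K) <| funext fun x =>
        congrArg σ ((Equiv.ofBijective f hf).symm_apply_apply x)
    exact ⟨_, hσf ▸ hσK, hσf ▸ .refl⟩

lemma StellarEquiv.exists_perm_joinC {M L P : Chain} (hP : P ≠ 0) (h : StellarEquiv M L)
    (hMP : Disjoint (vertsC M) (vertsC P)) :
    ∃ σ : Equiv.Perm ℕ, Disjoint (vertsC (renameC σ L)) (vertsC P) ∧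
      StellarEquiv (joinC M P) (joinC (renameC σ L) P) := by
  induction h with
  | refl => exact ⟨1, by rwa [Equiv.Perm.coe_one, renameC_id],
      by rw [Equiv.Perm.coe_one, renameC_id]; exact .refl⟩
  | tail _ hmove ih =>
    obtain ⟨σ, hσ, hMσ⟩ := ih
    obtain ⟨τ, hτ, hστ⟩ := hmove.exists_perm_joinC hP σ hσ
    exact ⟨τ, hτ, hMσ.trans hστ⟩

/-- stellar equivalence is preserved by joining with a fixed complex `P`
vertex-disjoint from both sides. -/
theorem stellarEquiv_join_right (M L P : Chain)
    (h : StellarEquiv M L)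
    (hMP : Disjoint (vertsC M) (vertsC P))
    (hLP : Disjoint (vertsC L) (vertsC P)) :
    StellarEquiv (joinC M P) (joinC L P) := by
  rcases eq_or_ne P 0 with rfl | hP
  · rw [joinC_zero_right, joinC_zero_right]
    exact .refl
  obtain ⟨σ, hσL, hML⟩ := h.exists_perm_joinC hP hMP
  have hback := stellarMove_joinC_renameC σ⁻¹ hσL (by rwa [renameC_inv_renameC])
  rw [renameC_inv_renameC] at hback
  exact hML.tail hback
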